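/- arXiv:1508.06766 — 2 statements merged into one kernel-verified Lean document; each statement's English description precedes it below -/
import Mathlib

section
/- Let p>2, let u be a nonnegative classical solution of u_t−Δu=|∇u|^p in Q_T with u=0 on Γ_T, having an isolated gradient blowup point at (0,0,T). Then there exists a constant C>0 (possibly depending on u) such that |u_t|≤C on Q̃:=(ω̄'×[T/2,T])∖{(0,0,T)}. -/
open Real Set Filter MeasureTheory

noncomputable section

/-- Partial derivative of `u(x,y,t)` with respect to `x`. -/
def pdx (u : ℝ → ℝ → ℝ → ℝ) (x y t : ℝ) : ℝ := deriv (fun s => u s y t) x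

/-- Partial derivative with respect to `y`. -/
def pdy (u : ℝ → ℝ → ℝ → ℝ) (x y t : ℝ) : ℝ := deriv (fun s => u x s t) y

/-- Partial derivative with respect to `t`. -/
def pdt (u : ℝ → ℝ → ℝ → ℝ) (x y t : ℝ) : ℝ := deriv (fun s => u x y s) t

/-- Second partial derivative with respect to `x`. -/
def pdxx (u : ℝ → ℝ → ℝ → ℝ) (x y t : ℝ) : ℝ := deriv (fun s => pdx u s y t) x

/-- Second partial derivative with respect to `y`. -/
def pdyy (u : ℝ → ℝ → ℝ → ℝ) (x y t : ℝ) : ℝ := deriv (fun s => pdy u x s t) y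

/-- Mixed second partial derivative `u_{xy}` (first `x`, then `y`). -/
def pdxy (u : ℝ → ℝ → ℝ → ℝ) (x y t : ℝ) : ℝ := deriv (fun s => pdx u x s t) y

/-- The norm of the spatial gradient, `|∇u| = (u_x² + u_y²)^{1/2}`. -/
def gradNorm (u : ℝ → ℝ → ℝ → ℝ) (x y t : ℝ) : ℝ :=
  Real.sqrt ((pdx u x y t) ^ 2 + (pdy u x y t) ^ 2)

/-- `C^{2,1}`-type regularity of `u` at the point `(x,y,t)`: twice (continuously)
differentiable in the space variables and once in time. -/
def C21At (u : ℝ → ℝ → ℝ → ℝ) (x y t : ℝ) : Prop :=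
  DifferentiableAt ℝ (fun s => u s y t) x ∧
  DifferentiableAt ℝ (fun s => u x s t) y ∧
  DifferentiableAt ℝ (fun s => u x y s) t ∧
  DifferentiableAt ℝ (fun s => pdx u s y t) x ∧
  DifferentiableAt ℝ (fun s => pdy u x s t) y ∧
  DifferentiableAt ℝ (fun s => pdx u x s t) y ∧
  ContinuousAt (fun q : ℝ × ℝ × ℝ => u q.1 q.2.1 q.2.2) (x, y, t) ∧
  ContinuousAt (fun q : ℝ × ℝ × ℝ => pdx u q.1 q.2.1 q.2.2) (x, y, t) ∧
  ContinuousAt (fun q : ℝ × ℝ × ℝ => pdy u q.1 q.2.1 q.2.2) (x, y, t) ∧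
  ContinuousAt (fun q : ℝ × ℝ × ℝ => pdt u q.1 q.2.1 q.2.2) (x, y, t) ∧
  ContinuousAt (fun q : ℝ × ℝ × ℝ => pdxx u q.1 q.2.1 q.2.2) (x, y, t) ∧
  ContinuousAt (fun q : ℝ × ℝ × ℝ => pdyy u q.1 q.2.1 q.2.2) (x, y, t) ∧
  ContinuousAt (fun q : ℝ × ℝ × ℝ => pdxy u q.1 q.2.1 q.2.2) (x, y, t)

/-- `u` is a nonnegative classical solution of `u_t - Δu = |∇u|^p` in
`Q_T = ω × (0,T)`, `ω = (-L,L) × (0,L)`, with `u = 0` on `Γ_T = (-L,L) × {0} × (0,T)`. -/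
structure ClassicalSolution (p L T : ℝ) (u : ℝ → ℝ → ℝ → ℝ) : Prop where
  nonneg : ∀ ⦃x y t : ℝ⦄, |x| ≤ L → y ∈ Icc (0:ℝ) L → t ∈ Ioo 0 T → 0 ≤ u x y t
  smooth : ∀ ⦃x y t : ℝ⦄, |x| ≤ L → y ∈ Icc (0:ℝ) L → t ∈ Ioo 0 T → C21At u x y t
  pde : ∀ ⦃x y t : ℝ⦄, |x| < L → y ∈ Ioo (0:ℝ) L → t ∈ Ioo 0 T →
    pdt u x y t - (pdxx u x y t + pdyy u x y t) = gradNorm u x y t ^ p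
  bc : ∀ ⦃x t : ℝ⦄, |x| < L → t ∈ Ioo 0 T → u x 0 t = 0

/-- `u` has an isolated gradient blow-up point at `(0,0,T)`:
`limsup |∇u| = ∞` at `(0,0,T)` while `∇u` stays bounded on `K × (0,T)` for every
compact `K ⊆ ω̄ \ {(0,0)}`. -/
structure IsolatedGBU (L T : ℝ) (u : ℝ → ℝ → ℝ → ℝ) : Prop where
  blowup : ∀ M : ℝ, ∀ δ > (0:ℝ), ∃ x y t : ℝ, |x| ≤ L ∧ y ∈ Icc (0:ℝ) L ∧
    t ∈ Ioo 0 T ∧ |x| < δ ∧ |y| < δ ∧ T - δ < t ∧ M < gradNorm u x y t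
  bounded : ∀ K : Set (ℝ × ℝ), IsCompact K →
    K ⊆ (Icc (-L) L ×ˢ Icc (0:ℝ) L) \ {((0:ℝ), (0:ℝ))} →
    ∃ M : ℝ, ∀ q ∈ K, ∀ t ∈ Ioo (0:ℝ) T, gradNorm u q.1 q.2 t ≤ M

/-- `u` extends as a `C^{2,1}` function to `(ω̄' × [T/2,T]) \ {(0,0,T)}`,
`ω' = (-L/2,L/2) × (0,L/2)`; values and derivatives at `t = T` refer to this extension. -/
def ExtC21 (L T : ℝ) (u : ℝ → ℝ → ℝ → ℝ) : Prop :=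
  ∀ ⦃x y t : ℝ⦄, |x| ≤ L / 2 → y ∈ Icc (0:ℝ) (L / 2) → t ∈ Icc (T / 2) T →
    ¬(x = 0 ∧ y = 0 ∧ t = T) → C21At u x y t

/-- The monotonicity condition `x·u_x ≤ 0` in `Q_T`. -/
def MonCond (L T : ℝ) (u : ℝ → ℝ → ℝ → ℝ) : Prop :=
  ∀ ⦃x y t : ℝ⦄, |x| < L → y ∈ Ioo (0:ℝ) L → t ∈ Ioo 0 T → x * pdx u x y t ≤ 0

/-!
Time shifts of a solution are compared with the solution itself. For `h > 0` the difference
`u(·, t + h) - u(·, t)` of two solutions of `u_t - Δu = |∇u|^p` solves the heat equation at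
every point where its spatial gradient vanishes, because the two gradient terms agree there.
The parabolic maximum principle on the box `[-L/2, L/2] × [0, L/2] × [T/2, t]` therefore
bounds `|u(·, t + h) - u(·, t)|` by its values on the parabolic boundary: it vanishes on
`y = 0`, and on the remaining faces (thickened by `h` in time) the mean value theorem bounds
it by `C h`, where `C` bounds `u_t` on a compact subset of `Q̃` avoiding `(0, 0, T)`.
Dividing by `h` bounds `u_t` for `t < T`, and the continuity of the extension carries the
bound to `t = T`.
-/

open Topology

theorem deriv_deriv_nonpos_of_isLocalMax {f : ℝ → ℝ} {x₀ : ℝ} (hmax : IsLocalMax f x₀)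
    (hc : ContinuousAt f x₀) : deriv (deriv f) x₀ ≤ 0 := by
  by_contra! hpos
  -- `f'' > 0` would make `x₀` a local minimum too, so `f` would be locally constant
  have hmin := isLocalMin_of_deriv_deriv_pos hpos hmax.deriv_eq_zero hc
  have hconst : f =ᶠ[𝓝 x₀] fun _ => f x₀ :=
    (hmin.and hmax).mono fun x hx => le_antisymm hx.2 hx.1
  have hderiv : deriv f =ᶠ[𝓝 x₀] fun _ => 0 :=
    hconst.eventuallyEq_nhds.mono fun x hx => by rw [hx.deriv_eq, deriv_const]
  rw [hderiv.deriv_eq, deriv_const] at hpos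
  exact hpos.false

theorem le_deriv_of_le_slope_left {f : ℝ → ℝ} {x m : ℝ} (hf : DifferentiableAt ℝ f x)
    (h : ∀ᶠ s in 𝓝[<] x, m ≤ slope f x s) : m ≤ deriv f x :=
  ge_of_tendsto (hf.hasDerivAt.tendsto_slope.mono_left (nhdsLT_le_nhdsNE x)) h

theorem abs_deriv_le_of_abs_slope_le_right {f : ℝ → ℝ} {x C : ℝ} (hf : DifferentiableAt ℝ f x)
    (h : ∀ᶠ s in 𝓝[>] x, |slope f x s| ≤ C) : |deriv f x| ≤ C :=
  le_of_tendsto (hf.hasDerivAt.tendsto_slope.mono_left (nhdsGT_le_nhdsNE x)).abs h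

def IsSubcaloricAtCritical (w : ℝ → ℝ → ℝ → ℝ) (x y t : ℝ) : Prop :=
  pdx w x y t = 0 → pdy w x y t = 0 → pdt w x y t ≤ pdxx w x y t + pdyy w x y t

section MaximumPrinciple

variable {w : ℝ → ℝ → ℝ → ℝ} {x₁ x₂ y₁ y₂ a b : ℝ}

theorem not_isMaxOn_sub_mul_time_of_interior {ε x₀ y₀ t₀ : ℝ} (hε : 0 < ε)
    (hx₀ : x₀ ∈ Ioo x₁ x₂) (hy₀ : y₀ ∈ Ioo y₁ y₂) (ht₀ : t₀ ∈ Ioc a b)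
    (hcont : ContinuousAt (fun q : ℝ × ℝ × ℝ => w q.1 q.2.1 q.2.2) (x₀, y₀, t₀))
    (hdiff : DifferentiableAt ℝ (fun s => w x₀ y₀ s) t₀)
    (hsub : IsSubcaloricAtCritical w x₀ y₀ t₀) :
    ¬ IsMaxOn (fun q : ℝ × ℝ × ℝ => w q.1 q.2.1 q.2.2 - ε * q.2.2)
      (Icc x₁ x₂ ×ˢ Icc y₁ y₂ ×ˢ Icc a b) (x₀, y₀, t₀) := by
  intro hmax
  have hle : ∀ ⦃x y t⦄, x ∈ Icc x₁ x₂ → y ∈ Icc y₁ y₂ → t ∈ Icc a b →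
      w x y t - ε * t ≤ w x₀ y₀ t₀ - ε * t₀ :=
    fun x y t hx hy ht => isMaxOn_iff.mp hmax (x, y, t) ⟨hx, hy, ht⟩
  have hmax_x : IsLocalMax (fun s => w s y₀ t₀) x₀ := by
    filter_upwards [Ioo_mem_nhds hx₀.1 hx₀.2] with s hs
    linarith [hle (Ioo_subset_Icc_self hs) (Ioo_subset_Icc_self hy₀) (Ioc_subset_Icc_self ht₀)]
  have hmax_y : IsLocalMax (fun s => w x₀ s t₀) y₀ := by
    filter_upwards [Ioo_mem_nhds hy₀.1 hy₀.2] with s hs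
    linarith [hle (Ioo_subset_Icc_self hx₀) (Ioo_subset_Icc_self hs) (Ioc_subset_Icc_self ht₀)]
  have hslope : ∀ᶠ s in 𝓝[<] t₀, ε ≤ slope (fun s => w x₀ y₀ s) t₀ s := by
    filter_upwards [Ioo_mem_nhdsLT ht₀.1] with s hs
    have := hle (Ioo_subset_Icc_self hx₀) (Ioo_subset_Icc_self hy₀) ⟨hs.1.le, hs.2.le.trans ht₀.2⟩
    rw [slope_def_field, le_div_iff_of_neg (sub_neg.mpr hs.2)]
    linarith
  have hxx : pdxx w x₀ y₀ t₀ ≤ 0 :=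
    deriv_deriv_nonpos_of_isLocalMax hmax_x (hcont.comp (f := fun s => (s, y₀, t₀)) (by fun_prop))
  have hyy : pdyy w x₀ y₀ t₀ ≤ 0 :=
    deriv_deriv_nonpos_of_isLocalMax hmax_y (hcont.comp (f := fun s => (x₀, s, t₀)) (by fun_prop))
  have ht : ε ≤ pdt w x₀ y₀ t₀ := le_deriv_of_le_slope_left hdiff hslope
  linarith [hsub hmax_x.deriv_eq_zero hmax_y.deriv_eq_zero]

theorem le_of_forall_parabolicBoundary_le {K : ℝ}
    (hcont : ∀ x ∈ Icc x₁ x₂, ∀ y ∈ Icc y₁ y₂, ∀ t ∈ Icc a b,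
      ContinuousAt (fun q : ℝ × ℝ × ℝ => w q.1 q.2.1 q.2.2) (x, y, t))
    (hdiff : ∀ x ∈ Ioo x₁ x₂, ∀ y ∈ Ioo y₁ y₂, ∀ t ∈ Ioc a b,
      DifferentiableAt ℝ (fun s => w x y s) t)
    (hsub : ∀ x ∈ Ioo x₁ x₂, ∀ y ∈ Ioo y₁ y₂, ∀ t ∈ Ioc a b, IsSubcaloricAtCritical w x y t)
    (hbdry : ∀ x ∈ Icc x₁ x₂, ∀ y ∈ Icc y₁ y₂, ∀ t ∈ Icc a b,
      (x = x₁ ∨ x = x₂ ∨ y = y₁ ∨ y = y₂ ∨ t = a) → w x y t ≤ K) :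
    ∀ x ∈ Icc x₁ x₂, ∀ y ∈ Icc y₁ y₂, ∀ t ∈ Icc a b, w x y t ≤ K := by
  intro x hx y hy t ht
  refine le_of_forall_pos_le_add fun ε hε => ?_
  set δ := ε / (t - a + 1)
  have hta : 0 ≤ t - a := sub_nonneg.mpr ht.1
  have hδ : 0 < δ := div_pos hε (by linarith)
  have hδε : δ * (t - a) ≤ ε := by
    rw [div_mul_eq_mul_div, div_le_iff₀ (by linarith)]
    nlinarith
  obtain ⟨⟨x₀, y₀, t₀⟩, ⟨hx₀, hy₀, ht₀⟩, hmax⟩ :=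
    (isCompact_Icc.prod (isCompact_Icc.prod isCompact_Icc)).exists_isMaxOn
      (f := fun q : ℝ × ℝ × ℝ => w q.1 q.2.1 q.2.2 - δ * q.2.2)
      ⟨(x, y, t), hx, hy, ht⟩ fun ⟨x', y', t'⟩ ⟨hx', hy', ht'⟩ =>
        ((hcont x' hx' y' hy' t' ht').sub (by fun_prop)).continuousWithinAt
  have hbdry₀ : x₀ = x₁ ∨ x₀ = x₂ ∨ y₀ = y₁ ∨ y₀ = y₂ ∨ t₀ = a := by
    by_contra! h
    obtain ⟨h₁, h₂, h₃, h₄, h₅⟩ := h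
    have hx₀' : x₀ ∈ Ioo x₁ x₂ := ⟨hx₀.1.lt_of_ne' h₁, hx₀.2.lt_of_ne h₂⟩
    have hy₀' : y₀ ∈ Ioo y₁ y₂ := ⟨hy₀.1.lt_of_ne' h₃, hy₀.2.lt_of_ne h₄⟩
    have ht₀' : t₀ ∈ Ioc a b := ⟨ht₀.1.lt_of_ne' h₅, ht₀.2⟩
    exact not_isMaxOn_sub_mul_time_of_interior hδ hx₀' hy₀' ht₀' (hcont x₀ hx₀ y₀ hy₀ t₀ ht₀)
      (hdiff x₀ hx₀' y₀ hy₀' t₀ ht₀') (hsub x₀ hx₀' y₀ hy₀' t₀ ht₀') hmax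
  have hq := isMaxOn_iff.mp hmax (x, y, t) ⟨hx, hy, ht⟩
  have hK := hbdry x₀ hx₀ y₀ hy₀ t₀ ht₀ hbdry₀
  have hδa : δ * a ≤ δ * t₀ := mul_le_mul_of_nonneg_left ht₀.1 hδ.le
  dsimp only at hq
  linarith

end MaximumPrinciple

section PartialDerivatives

variable {v w : ℝ → ℝ → ℝ → ℝ} {x y t : ℝ}

theorem pdx_const_mul (c : ℝ) : pdx (fun x y t => c * v x y t) x y t = c * pdx v x y t := by
  simp only [pdx, deriv_const_mul_field']

theorem pdy_const_mul (c : ℝ) : pdy (fun x y t => c * v x y t) x y t = c * pdy v x y t := by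
  simp only [pdy, deriv_const_mul_field']

theorem pdt_const_mul (c : ℝ) : pdt (fun x y t => c * v x y t) x y t = c * pdt v x y t := by
  simp only [pdt, deriv_const_mul_field']

theorem pdxx_const_mul (c : ℝ) : pdxx (fun x y t => c * v x y t) x y t = c * pdxx v x y t := by
  simp only [pdxx, pdx, deriv_const_mul_field']

theorem pdyy_const_mul (c : ℝ) : pdyy (fun x y t => c * v x y t) x y t = c * pdyy v x y t := by
  simp only [pdyy, pdy, deriv_const_mul_field']

theorem pdx_sub (hv : DifferentiableAt ℝ (fun s => v s y t) x)
    (hw : DifferentiableAt ℝ (fun s => w s y t) x) :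
    pdx (fun x y t => v x y t - w x y t) x y t = pdx v x y t - pdx w x y t :=
  deriv_fun_sub hv hw

theorem pdy_sub (hv : DifferentiableAt ℝ (fun s => v x s t) y)
    (hw : DifferentiableAt ℝ (fun s => w x s t) y) :
    pdy (fun x y t => v x y t - w x y t) x y t = pdy v x y t - pdy w x y t :=
  deriv_fun_sub hv hw

theorem pdt_sub (hv : DifferentiableAt ℝ (fun s => v x y s) t)
    (hw : DifferentiableAt ℝ (fun s => w x y s) t) :
    pdt (fun x y t => v x y t - w x y t) x y t = pdt v x y t - pdt w x y t :=
  deriv_fun_sub hv hw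

theorem pdxx_sub (hv : ∀ᶠ s in 𝓝 x, DifferentiableAt ℝ (fun r => v r y t) s)
    (hw : ∀ᶠ s in 𝓝 x, DifferentiableAt ℝ (fun r => w r y t) s)
    (hv' : DifferentiableAt ℝ (fun s => pdx v s y t) x)
    (hw' : DifferentiableAt ℝ (fun s => pdx w s y t) x) :
    pdxx (fun x y t => v x y t - w x y t) x y t = pdxx v x y t - pdxx w x y t := by
  have hsub : (fun s => pdx (fun x y t => v x y t - w x y t) s y t) =ᶠ[𝓝 x]
      fun s => pdx v s y t - pdx w s y t :=
    (hv.and hw).mono fun s hs => pdx_sub hs.1 hs.2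
  exact hsub.deriv_eq.trans (deriv_fun_sub hv' hw')

theorem pdyy_sub (hv : ∀ᶠ s in 𝓝 y, DifferentiableAt ℝ (fun r => v x r t) s)
    (hw : ∀ᶠ s in 𝓝 y, DifferentiableAt ℝ (fun r => w x r t) s)
    (hv' : DifferentiableAt ℝ (fun s => pdy v x s t) y)
    (hw' : DifferentiableAt ℝ (fun s => pdy w x s t) y) :
    pdyy (fun x y t => v x y t - w x y t) x y t = pdyy v x y t - pdyy w x y t := by
  have hsub : (fun s => pdy (fun x y t => v x y t - w x y t) x s t) =ᶠ[𝓝 y]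
      fun s => pdy v x s t - pdy w x s t :=
    (hv.and hw).mono fun s hs => pdy_sub hs.1 hs.2
  exact hsub.deriv_eq.trans (deriv_fun_sub hv' hw')

theorem pdt_comp_add_const (h : ℝ) :
    pdt (fun x y t => v x y (t + h)) x y t = pdt v x y (t + h) :=
  deriv_comp_add_const _ _ _

end PartialDerivatives

structure HeatRegularAt (v : ℝ → ℝ → ℝ → ℝ) (x y t : ℝ) : Prop where
  eventually_dx : ∀ᶠ s in 𝓝 x, DifferentiableAt ℝ (fun r => v r y t) s
  eventually_dy : ∀ᶠ s in 𝓝 y, DifferentiableAt ℝ (fun r => v x r t) s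
  dxx : DifferentiableAt ℝ (fun s => pdx v s y t) x
  dyy : DifferentiableAt ℝ (fun s => pdy v x s t) y
  dt : DifferentiableAt ℝ (fun s => v x y s) t

namespace HeatRegularAt

variable {v w : ℝ → ℝ → ℝ → ℝ} {x y t : ℝ}

theorem comp_add_const {h : ℝ} (hv : HeatRegularAt v x y (t + h)) :
    HeatRegularAt (fun x y t => v x y (t + h)) x y t where
  eventually_dx := hv.eventually_dx
  eventually_dy := hv.eventually_dy
  dxx := hv.dxx
  dyy := hv.dyy
  dt := hv.dt.comp t (differentiableAt_id.add_const h)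

/-- Two solutions of the same equation `v_t - Δv = F(∇v)` have equal gradient terms wherever
their difference is critical, so there the difference solves the heat equation. -/
theorem isSubcaloricAtCritical_const_mul_sub {F : ℝ → ℝ → ℝ} (c : ℝ)
    (hv : HeatRegularAt v x y t) (hw : HeatRegularAt w x y t)
    (hvF : pdt v x y t - (pdxx v x y t + pdyy v x y t) = F (pdx v x y t) (pdy v x y t))
    (hwF : pdt w x y t - (pdxx w x y t + pdyy w x y t) = F (pdx w x y t) (pdy w x y t)) :
    IsSubcaloricAtCritical (fun x y t => c * (v x y t - w x y t)) x y t := by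
  intro hcx hcy
  rw [pdt_const_mul, pdxx_const_mul, pdyy_const_mul,
    pdt_sub hv.dt hw.dt, pdxx_sub hv.eventually_dx hw.eventually_dx hv.dxx hw.dxx,
    pdyy_sub hv.eventually_dy hw.eventually_dy hv.dyy hw.dyy]
  rcases eq_or_ne c 0 with rfl | hc
  · simp
  rw [pdx_const_mul, pdx_sub hv.eventually_dx.self_of_nhds hw.eventually_dx.self_of_nhds,
    mul_eq_zero, sub_eq_zero] at hcx
  rw [pdy_const_mul, pdy_sub hv.eventually_dy.self_of_nhds hw.eventually_dy.self_of_nhds,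
    mul_eq_zero, sub_eq_zero] at hcy
  rw [hcx.resolve_left hc, hcy.resolve_left hc] at hvF
  have : pdt v x y t - pdt w x y t =
      pdxx v x y t - pdxx w x y t + (pdyy v x y t - pdyy w x y t) := by
    linarith
  rw [this, mul_add]

end HeatRegularAt

namespace ClassicalSolution

variable {p L T : ℝ} {u : ℝ → ℝ → ℝ → ℝ}

theorem heatRegularAt (hsol : ClassicalSolution p L T u) {x y t : ℝ} (hx : |x| < L)
    (hy : y ∈ Ioo 0 L) (ht : t ∈ Ioo 0 T) : HeatRegularAt u x y t where
  eventually_dx := by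
    filter_upwards [(isOpen_lt continuous_abs continuous_const).mem_nhds hx] with s hs
    exact (hsol.smooth hs.le (Ioo_subset_Icc_self hy) ht).1
  eventually_dy := by
    filter_upwards [Ioo_mem_nhds hy.1 hy.2] with s hs
    exact (hsol.smooth hx.le (Ioo_subset_Icc_self hs) ht).2.1
  dxx := (hsol.smooth hx.le (Ioo_subset_Icc_self hy) ht).2.2.2.1
  dyy := (hsol.smooth hx.le (Ioo_subset_Icc_self hy) ht).2.2.2.2.1
  dt := (hsol.smooth hx.le (Ioo_subset_Icc_self hy) ht).2.2.1

theorem isSubcaloricAtCritical_timeIncrement (hsol : ClassicalSolution p L T u) (σ : ℝ)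
    {x y t h : ℝ} (hx : |x| < L) (hy : y ∈ Ioo 0 L) (ht : t ∈ Ioo 0 T) (hth : t + h ∈ Ioo 0 T) :
    IsSubcaloricAtCritical (fun x y t => σ * (u x y (t + h) - u x y t)) x y t := by
  refine HeatRegularAt.isSubcaloricAtCritical_const_mul_sub (F := fun a b => √(a ^ 2 + b ^ 2) ^ p)
    σ (hsol.heatRegularAt hx hy hth).comp_add_const (hsol.heatRegularAt hx hy ht) ?_
    (hsol.pde hx hy ht)
  rw [pdt_comp_add_const]
  exact hsol.pde hx hy hth

theorem abs_timeIncrement_le (hsol : ClassicalSolution p L T u) {x y t h C : ℝ}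
    (hx : |x| ≤ L) (hy : y ∈ Icc 0 L) (ht : 0 < t) (hh : 0 ≤ h) (hth : t + h < T)
    (hC : ∀ s ∈ Icc t (t + h), |pdt u x y s| ≤ C) :
    |u x y (t + h) - u x y t| ≤ C * h := by
  have hdiff : ∀ s ∈ Icc t (t + h), DifferentiableAt ℝ (fun s => u x y s) s := fun s hs =>
    (hsol.smooth hx hy ⟨ht.trans_le hs.1, hs.2.trans_lt hth⟩).2.2.1
  have := (convex_Icc t (t + h)).norm_image_sub_le_of_norm_deriv_le hdiff hC
    (left_mem_Icc.mpr (by linarith)) (right_mem_Icc.mpr (by linarith))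
  simpa [abs_of_nonneg hh] using this

theorem abs_timeIncrement_le_on_parabolicBoundary (hsol : ClassicalSolution p L T u)
    {x₁ x₂ y₂ a b h C : ℝ} (hx₁ : -L ≤ x₁) (hx₂ : x₂ ≤ L) (hy₂ : y₂ ≤ L) (ha : 0 < a)
    (hh : 0 ≤ h) (hbT : b + h < T)
    (hC : ∀ x ∈ Icc x₁ x₂, ∀ y ∈ Icc 0 y₂, ∀ t ∈ Icc a (b + h),
      (x = x₁ ∨ x = x₂ ∨ y = y₂ ∨ t ≤ a + h) → |pdt u x y t| ≤ C) :
    ∀ x ∈ Icc x₁ x₂, ∀ y ∈ Icc 0 y₂, ∀ t ∈ Icc a b, (x = x₁ ∨ x = x₂ ∨ y = 0 ∨ y = y₂ ∨ t = a) →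
      |u x y (t + h) - u x y t| ≤ C * h := by
  intro x hx y hy t ht hbdry
  have ht₀ : t ∈ Ioo 0 T := ⟨ha.trans_le ht.1, by linarith [ht.2]⟩
  have hth : t + h ∈ Ioo 0 T := ⟨by linarith [ht.1], by linarith [ht.2]⟩
  by_cases hface : x = x₁ ∨ x = x₂ ∨ y = y₂ ∨ t = a
  · exact hsol.abs_timeIncrement_le (abs_le.mpr ⟨hx₁.trans hx.1, hx.2.trans hx₂⟩)
      ⟨hy.1, hy.2.trans hy₂⟩ ht₀.1 hh hth.2 fun s hs =>
        hC x hx y hy s ⟨ht.1.trans hs.1, by linarith [ht.2, hs.2]⟩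
          (hface.imp_right (Or.imp_right (Or.imp_right fun (h' : t = a) => h' ▸ hs.2)))
  · have hy0 : y = 0 := by tauto
    simp only [not_or] at hface
    have hxL : |x| < L := abs_lt.mpr
      ⟨hx₁.trans_lt (hx.1.lt_of_ne' hface.1), (hx.2.lt_of_ne hface.2.1).trans_le hx₂⟩
    have hC0 : 0 ≤ C := (abs_nonneg _).trans
      (hC x₁ ⟨le_rfl, hx.1.trans hx.2⟩ 0 ⟨le_rfl, hy.1.trans hy.2⟩ a
        ⟨le_rfl, by linarith [ht.1, ht.2]⟩ (Or.inl rfl))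
    rw [hy0, hsol.bc hxL ht₀, hsol.bc hxL hth, sub_self, abs_zero]
    positivity

theorem const_mul_timeIncrement_le (hsol : ClassicalSolution p L T u) (σ : ℝ)
    {x₁ x₂ y₂ a b h C : ℝ} (hx₁ : -L ≤ x₁) (hx₂ : x₂ ≤ L) (hy₂ : y₂ ≤ L) (ha : 0 < a)
    (hh : 0 ≤ h) (hbT : b + h < T)
    (hC : ∀ x ∈ Icc x₁ x₂, ∀ y ∈ Icc 0 y₂, ∀ t ∈ Icc a (b + h),
      (x = x₁ ∨ x = x₂ ∨ y = y₂ ∨ t ≤ a + h) → |pdt u x y t| ≤ C) :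
    ∀ x ∈ Icc x₁ x₂, ∀ y ∈ Icc 0 y₂, ∀ t ∈ Icc a b,
      σ * (u x y (t + h) - u x y t) ≤ |σ| * (C * h) := by
  have habs : ∀ x ∈ Icc x₁ x₂, |x| ≤ L := fun x hx => abs_le.mpr ⟨hx₁.trans hx.1, hx.2.trans hx₂⟩
  have hy : ∀ y ∈ Icc 0 y₂, y ∈ Icc 0 L := fun y hy => ⟨hy.1, hy.2.trans hy₂⟩
  have ht : ∀ t ∈ Icc a b, t ∈ Ioo 0 T := fun t ht => ⟨ha.trans_le ht.1, by linarith [ht.2]⟩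
  have hth : ∀ t ∈ Icc a b, t + h ∈ Ioo 0 T := fun t ht =>
    ⟨by linarith [ht.1], by linarith [ht.2]⟩
  apply le_of_forall_parabolicBoundary_le
  · intro x hx y hy' t ht'
    have hcont₀ := (hsol.smooth (habs x hx) (hy y hy') (ht t ht')).2.2.2.2.2.2.1
    have hcont₁ := (hsol.smooth (habs x hx) (hy y hy') (hth t ht')).2.2.2.2.2.2.1
    have hcont₁' : ContinuousAt (fun q : ℝ × ℝ × ℝ => u q.1 q.2.1 (q.2.2 + h)) (x, y, t) :=
      hcont₁.comp_of_eq (f := fun q : ℝ × ℝ × ℝ => (q.1, q.2.1, q.2.2 + h)) (by fun_prop) rfl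
    exact continuousAt_const.mul (hcont₁'.sub hcont₀)
  · intro x hx y hy' t ht'
    have hd₀ := (hsol.smooth (habs x (Ioo_subset_Icc_self hx)) (hy y (Ioo_subset_Icc_self hy'))
      (ht t (Ioc_subset_Icc_self ht'))).2.2.1
    have hd₁ := (hsol.smooth (habs x (Ioo_subset_Icc_self hx)) (hy y (Ioo_subset_Icc_self hy'))
      (hth t (Ioc_subset_Icc_self ht'))).2.2.1
    exact ((hd₁.comp t (differentiableAt_id.add_const h)).sub hd₀).const_mul σ
  · intro x hx y hy' t ht'
    exact hsol.isSubcaloricAtCritical_timeIncrement σ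
      (abs_lt.mpr ⟨hx₁.trans_lt hx.1, hx.2.trans_le hx₂⟩) ⟨hy'.1, hy'.2.trans_le hy₂⟩
      (ht t (Ioc_subset_Icc_self ht')) (hth t (Ioc_subset_Icc_self ht'))
  · intro x hx y hy' t ht' hbdry
    calc σ * (u x y (t + h) - u x y t) ≤ |σ| * |u x y (t + h) - u x y t| := by
          rw [← abs_mul]; exact le_abs_self _
      _ ≤ |σ| * (C * h) := mul_le_mul_of_nonneg_left
          (hsol.abs_timeIncrement_le_on_parabolicBoundary hx₁ hx₂ hy₂ ha hh hbT hC
            x hx y hy' t ht' hbdry) (abs_nonneg σ)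

theorem abs_pdt_le_of_parabolicBoundaryLayer (hsol : ClassicalSolution p L T u)
    {x₁ x₂ y₂ a δ C : ℝ} (hx₁ : -L ≤ x₁) (hx₂ : x₂ ≤ L) (hy₂ : y₂ ≤ L) (ha : 0 < a) (hδ : 0 < δ)
    (hC : ∀ x ∈ Icc x₁ x₂, ∀ y ∈ Icc 0 y₂, ∀ t ∈ Ico a T,
      (x = x₁ ∨ x = x₂ ∨ y = y₂ ∨ t ≤ a + δ) → |pdt u x y t| ≤ C) :
    ∀ x ∈ Icc x₁ x₂, ∀ y ∈ Icc 0 y₂, ∀ t ∈ Ico a T, |pdt u x y t| ≤ C := by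
  intro x hx y hy t ht
  have habs : |x| ≤ L := abs_le.mpr ⟨hx₁.trans hx.1, hx.2.trans hx₂⟩
  refine abs_deriv_le_of_abs_slope_le_right
    (hsol.smooth habs ⟨hy.1, hy.2.trans hy₂⟩ ⟨ha.trans_le ht.1, ht.2⟩).2.2.1 ?_
  filter_upwards [Ioo_mem_nhdsGT (lt_min ht.2 (lt_add_of_pos_right t hδ))] with s hs
  have hsT : s < T := hs.2.trans_le (min_le_left _ _)
  have hsδ : s < t + δ := hs.2.trans_le (min_le_right _ _)
  have hinc : ∀ σ : ℝ, σ * (u x y s - u x y t) ≤ |σ| * (C * (s - t)) := fun σ => by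
    have := hsol.const_mul_timeIncrement_le σ (b := t) (h := s - t) hx₁ hx₂ hy₂ ha
      (by linarith [hs.1]) (by linarith)
      (fun x hx y hy t' ht' hface => hC x hx y hy t' ⟨ht'.1, by linarith [ht'.2]⟩
        (hface.imp_right (Or.imp_right (Or.imp_right fun h' => by linarith))))
      x hx y hy t ⟨ht.1, le_rfl⟩
    rwa [add_sub_cancel] at this
  have hst : 0 < s - t := sub_pos.mpr hs.1
  rw [slope_def_field, abs_div, abs_of_pos hst, div_le_iff₀ hst]
  have hup := hinc 1
  have hdown := hinc (-1)
  simp only [abs_one, abs_neg, one_mul, neg_one_mul] at hup hdown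
  exact abs_le.mpr ⟨by linarith, hup⟩

end ClassicalSolution

theorem ExtC21.exists_abs_pdt_le {L T : ℝ} {u : ℝ → ℝ → ℝ → ℝ} (hext : ExtC21 L T u)
    {S : Set (ℝ × ℝ × ℝ)} (hS : IsCompact S)
    (hSsub : S ⊆ Icc (-(L / 2)) (L / 2) ×ˢ Icc 0 (L / 2) ×ˢ Icc (T / 2) T) (hsing : (0, 0, T) ∉ S) :
    ∃ C, 0 < C ∧ ∀ q ∈ S, |pdt u q.1 q.2.1 q.2.2| ≤ C := by
  obtain ⟨C, hC⟩ := hS.exists_bound_of_continuousOn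
    (f := fun q : ℝ × ℝ × ℝ => pdt u q.1 q.2.1 q.2.2) fun ⟨x, y, t⟩ hq => by
      obtain ⟨hx, hy, ht⟩ := hSsub hq
      have hne : ¬(x = 0 ∧ y = 0 ∧ t = T) := by
        rintro ⟨rfl, rfl, rfl⟩
        exact hsing hq
      exact (hext (abs_le.mpr hx) hy ht hne).2.2.2.2.2.2.2.2.2.1.continuousWithinAt
  exact ⟨max C 1, by positivity, fun q hq => (hC q hq).trans (le_max_left _ _)⟩

theorem ut_bounded_general (p L T : ℝ) (hL : 0 < L) (hT : 0 < T)
    (u : ℝ → ℝ → ℝ → ℝ)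
    (hsol : ClassicalSolution p L T u)
    (hext : ExtC21 L T u) :
    ∃ C : ℝ, 0 < C ∧ ∀ x y t : ℝ, |x| ≤ L/2 → y ∈ Icc (0:ℝ) (L/2) →
      t ∈ Icc (T/2) T → ¬(x = 0 ∧ y = 0 ∧ t = T) → |pdt u x y t| ≤ C := by
  set S : Set (ℝ × ℝ × ℝ) := (Icc (-(L / 2)) (L / 2) ×ˢ Icc 0 (L / 2) ×ˢ Icc (T / 2) T) ∩
    {q | q.1 = -(L / 2) ∨ q.1 = L / 2 ∨ q.2.1 = L / 2 ∨ q.2.2 ≤ T / 2 + T / 4}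
  have hS : IsCompact S := (isCompact_Icc.prod (isCompact_Icc.prod isCompact_Icc)).inter_right
    ((isClosed_eq (by fun_prop) (by fun_prop)).union
      ((isClosed_eq (by fun_prop) (by fun_prop)).union
        ((isClosed_eq (by fun_prop) (by fun_prop)).union
          (isClosed_le (continuous_snd.comp continuous_snd) continuous_const))))
  obtain ⟨C, hC0, hC⟩ := hext.exists_abs_pdt_le hS inter_subset_left fun h => by
    rcases h.2 with h' | h' | h' | h' <;> dsimp only at h' <;> linarith
  have hbefore := hsol.abs_pdt_le_of_parabolicBoundaryLayer (by linarith) (by linarith)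
    (by linarith) (by positivity) (by positivity)
    fun x hx y hy t ht hface => hC (x, y, t) ⟨⟨hx, hy, ht.1, ht.2.le⟩, hface⟩
  refine ⟨C, hC0, fun x y t hx hy ht hne => ?_⟩
  rcases ht.2.lt_or_eq with htT | htT
  · exact hbefore x (abs_le.mp hx) y hy t ⟨ht.1, htT⟩
  rw [htT] at ht hne ⊢
  have hcont : ContinuousAt (fun s => |pdt u x y s|) T :=
    ((hext hx hy ht hne).2.2.2.2.2.2.2.2.2.1.comp_of_eq (f := fun s => (x, y, s))
      (by fun_prop) rfl).abs
  refine hcont.continuousWithinAt.closure_le (s := Ico (T / 2) T) ?_ continuousWithinAt_const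
    fun s hs => hbefore x (abs_le.mp hx) y hy s hs
  rw [closure_Ico (by linarith)]
  exact right_mem_Icc.mpr (by linarith)

/-- Proposition 2.2 (i): the time derivative is bounded on
`Q̃ = (ω̄' × [T/2,T]) \ {(0,0,T)}`. -/
theorem ut_bounded (p L T : ℝ) (hp : 2 < p) (hL : 0 < L) (hT : 0 < T)
    (u : ℝ → ℝ → ℝ → ℝ)
    (hsol : ClassicalSolution p L T u) (hgbu : IsolatedGBU L T u)
    (hext : ExtC21 L T u) :
    ∃ C : ℝ, 0 < C ∧ ∀ x y t : ℝ, |x| ≤ L/2 → y ∈ Icc (0:ℝ) (L/2) →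
      t ∈ Icc (T/2) T → ¬(x = 0 ∧ y = 0 ∧ t = T) → |pdt u x y t| ≤ C :=
  ut_bounded_general p L T hL hT u hsol hext
end
end

section
/- Let p>2, let u be a nonnegative classical solution of u_t−Δu=|∇u|^p in Q_T with u=0 on Γ_T, having an isolated gradient blowup point at (0,0,T). Then there exists a constant C>0 (possibly depending on u) such that u_y ≥ −C on Q̃:=(ω̄'×[T/2,T])∖{(0,0,T)}. -/
open Real Set Filter MeasureTheory

noncomputable section

/-!
Fix `0 < h ≤ L/4` and `ε > 0`, and let `w = u(x, y + h, t) - u(x, y, t) + ε t`. At an interior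
minimum of `w` the first-order conditions make the gradients of `u` at `(x, y + h, t)` and
`(x, y, t)` equal, so the right-hand sides `|∇u|^p` cancel when the two equations are subtracted:
`∂ₜw - ε = Δw ≥ 0`, against `∂ₜw ≤ 0`. Hence on `[-L/2, L/2] × [0, 3L/4] × [T/2, t]` the minimum of
`w` sits on the parabolic boundary. On `y = 0` the boundary condition and `u ≥ 0` give `w ≥ 0`;
the remaining faces avoid the blow-up point, so `|∇u| ≤ M` there and `w ≥ -M h`. Letting `ε → 0`
and then `h → 0` gives `u_y ≥ -M` for `t < T`, and continuity of the extension gives it at `t = T`.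
-/

open Topology

section Calculus

variable {f f' : ℝ → ℝ} {a b c : ℝ}

theorem IsMinOn.mul_sub_nonneg_of_hasDerivAt (h : IsMinOn f (uIcc a b) a)
    (hf : HasDerivAt f c a) : 0 ≤ c * (b - a) := by
  simpa [mul_comm] using h.localize.hasFDerivWithinAt_nonneg hf.hasFDerivAt.hasFDerivWithinAt
    (sub_mem_posTangentConeAt_of_segment_subset (segment_eq_uIcc a b).subset)

-- If `c < 0`, the second-derivative test makes `a` a local maximum too, so `f` is locally
-- constant and its second derivative vanishes.
theorem IsLocalMin.nonneg_of_hasDerivAt_of_hasDerivAt (h : IsLocalMin f a)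
    (hf : ∀ᶠ x in 𝓝 a, HasDerivAt f (f' x) x) (hf' : HasDerivAt f' c a) : 0 ≤ c := by
  by_contra! hc
  have hderiv : deriv f =ᶠ[𝓝 a] f' := hf.mono fun x hx => hx.deriv
  have hneg : deriv (deriv f) a < 0 := by rwa [(hf'.congr_of_eventuallyEq hderiv).deriv]
  have hmax := isLocalMax_of_deriv_deriv_neg hneg h.deriv_eq_zero hf.self_of_nhds.continuousAt
  have hconst : f =ᶠ[𝓝 a] fun _ => f a := by
    filter_upwards [h, hmax] with x hmin hmax using le_antisymm hmax hmin
  have hzero : deriv (deriv f) a = 0 := by simp [hconst.deriv.deriv_eq]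
  linarith

end Calculus

section C21At

variable {u : ℝ → ℝ → ℝ → ℝ} {x y t : ℝ}

theorem C21At.hasDerivAt_pdx (h : C21At u x y t) :
    HasDerivAt (fun s => u s y t) (pdx u x y t) x :=
  h.1.hasDerivAt

theorem C21At.hasDerivAt_pdy (h : C21At u x y t) :
    HasDerivAt (fun s => u x s t) (pdy u x y t) y :=
  h.2.1.hasDerivAt

theorem C21At.hasDerivAt_pdt (h : C21At u x y t) :
    HasDerivAt (fun s => u x y s) (pdt u x y t) t :=
  h.2.2.1.hasDerivAt

theorem C21At.hasDerivAt_pdxx (h : C21At u x y t) :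
    HasDerivAt (fun s => pdx u s y t) (pdxx u x y t) x :=
  h.2.2.2.1.hasDerivAt

theorem C21At.hasDerivAt_pdyy (h : C21At u x y t) :
    HasDerivAt (fun s => pdy u x s t) (pdyy u x y t) y :=
  h.2.2.2.2.1.hasDerivAt

theorem C21At.continuousAt (h : C21At u x y t) :
    ContinuousAt (fun q : ℝ × ℝ × ℝ => u q.1 q.2.1 q.2.2) (x, y, t) :=
  h.2.2.2.2.2.2.1

theorem C21At.continuousAt_pdx (h : C21At u x y t) :
    ContinuousAt (fun q : ℝ × ℝ × ℝ => pdx u q.1 q.2.1 q.2.2) (x, y, t) :=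
  h.2.2.2.2.2.2.2.1

theorem C21At.continuousAt_pdy (h : C21At u x y t) :
    ContinuousAt (fun q : ℝ × ℝ × ℝ => pdy u q.1 q.2.1 q.2.2) (x, y, t) :=
  h.2.2.2.2.2.2.2.2.1

theorem C21At.continuousAt_gradNorm_slice (h : C21At u x y t) :
    ContinuousAt (fun q : ℝ × ℝ => gradNorm u q.1 q.2 t) (x, y) := by
  have hslice : Continuous fun q : ℝ × ℝ => ((q.1, q.2, t) : ℝ × ℝ × ℝ) := by fun_prop
  have hpdx := h.continuousAt_pdx.comp_of_eq (hslice.continuousAt (x := (x, y))) rfl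
  have hpdy := h.continuousAt_pdy.comp_of_eq (hslice.continuousAt (x := (x, y))) rfl
  exact ((hpdx.pow 2).add (hpdy.pow 2)).sqrt

theorem C21At.continuousWithinAt_pdy_left (h : C21At u x y t) :
    ContinuousWithinAt (fun s => pdy u x y s) (Iio t) t :=
  (h.continuousAt_pdy.comp_of_eq (by fun_prop : Continuous fun s : ℝ => (x, y, s)).continuousAt
    rfl).continuousWithinAt

end C21At

theorem abs_pdy_le_gradNorm (u : ℝ → ℝ → ℝ → ℝ) (x y t : ℝ) :
    |pdy u x y t| ≤ gradNorm u x y t :=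
  Real.abs_le_sqrt (le_add_of_nonneg_left (sq_nonneg _))

def yDiff (u : ℝ → ℝ → ℝ → ℝ) (h x y t : ℝ) : ℝ := u x (y + h) t - u x y t

section yDiff

variable {u : ℝ → ℝ → ℝ → ℝ} {h x y t : ℝ}

theorem neg_mul_le_yDiff {M : ℝ} (hh : 0 ≤ h)
    (hdiff : ∀ s ∈ Icc y (y + h), DifferentiableAt ℝ (fun s => u x s t) s)
    (hM : ∀ s ∈ Icc y (y + h), gradNorm u x s t ≤ M) : -(M * h) ≤ yDiff u h x y t := by
  have hmvt := (convex_Icc y (y + h)).mul_sub_le_image_sub_of_le_deriv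
    (fun s hs => (hdiff s hs).continuousAt.continuousWithinAt)
    (fun s hs => (hdiff s (interior_subset hs)).differentiableWithinAt)
    (fun s hs => neg_le_of_abs_le ((abs_pdy_le_gradNorm u x s t).trans
      (hM s (interior_subset hs))))
    y (left_mem_Icc.2 (by linarith)) (y + h) (right_mem_Icc.2 (by linarith)) (by linarith)
  rw [yDiff]
  linarith

theorem continuousAt_yDiff (hshift : C21At u x (y + h) t) (hbase : C21At u x y t) :
    ContinuousAt (fun q : ℝ × ℝ × ℝ => yDiff u h q.1 q.2.1 q.2.2) (x, y, t) :=
  (hshift.continuousAt.comp_of_eq (by fun_prop : Continuous fun q : ℝ × ℝ × ℝ =>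
    (q.1, q.2.1 + h, q.2.2)).continuousAt rfl).sub hbase.continuousAt

end yDiff

-- These faces of `[-L/2, L/2] × [0, L] × [T/2, T)` stay away from the blow-up point `(0, 0, T)`.
def GradNormLeOnOuterFaces (L T M : ℝ) (u : ℝ → ℝ → ℝ → ℝ) : Prop :=
  ∀ ⦃x y t : ℝ⦄, |x| ≤ L / 2 → y ∈ Icc 0 L → t ∈ Ico (T / 2) T →
    (|x| = L / 2 ∨ 3 * L / 4 ≤ y ∨ t = T / 2) → gradNorm u x y t ≤ M

namespace ClassicalSolution

variable {p L T : ℝ} {u : ℝ → ℝ → ℝ → ℝ}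

theorem eventually_hasDerivAt_yDiff_x (hsol : ClassicalSolution p L T u) {h x₀ y₀ t₀ : ℝ}
    (hx : |x₀| < L) (hy : y₀ ∈ Icc 0 L) (hyh : y₀ + h ∈ Icc 0 L) (ht : t₀ ∈ Ioo 0 T) :
    ∀ᶠ x in 𝓝 x₀, HasDerivAt (fun x => yDiff u h x y₀ t₀)
      (pdx u x (y₀ + h) t₀ - pdx u x y₀ t₀) x := by
  filter_upwards [continuous_abs.continuousAt.eventually_lt continuousAt_const hx] with x hx
  exact (hsol.smooth hx.le hyh ht).hasDerivAt_pdx.sub (hsol.smooth hx.le hy ht).hasDerivAt_pdx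

theorem eventually_hasDerivAt_yDiff_y (hsol : ClassicalSolution p L T u) {h x₀ y₀ t₀ : ℝ}
    (hh : 0 ≤ h) (hx : |x₀| ≤ L) (hy : 0 < y₀) (hyh : y₀ + h < L) (ht : t₀ ∈ Ioo 0 T) :
    ∀ᶠ y in 𝓝 y₀, HasDerivAt (fun y => yDiff u h x₀ y t₀)
      (pdy u x₀ (y + h) t₀ - pdy u x₀ y t₀) y := by
  filter_upwards [eventually_gt_nhds hy, eventually_lt_nhds (by linarith : y₀ < L - h)]
    with y hy0 hyL
  exact ((hsol.smooth hx ⟨by linarith, by linarith⟩ ht).hasDerivAt_pdy.comp_add_const y h).sub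
    (hsol.smooth hx ⟨hy0.le, by linarith⟩ ht).hasDerivAt_pdy

theorem not_isMinOn_yDiff_add_interior (hsol : ClassicalSolution p L T u) {h ε : ℝ}
    (hh : 0 ≤ h) (hε : 0 < ε) {a₁ b₁ a₂ b₂ a₃ b₃ x₀ y₀ t₀ : ℝ}
    (hmin : IsMinOn (fun q : ℝ × ℝ × ℝ => yDiff u h q.1 q.2.1 q.2.2 + ε * q.2.2)
      (Icc a₁ b₁ ×ˢ Icc a₂ b₂ ×ˢ Icc a₃ b₃) (x₀, y₀, t₀))
    (hx : x₀ ∈ Ioo a₁ b₁) (hy : y₀ ∈ Ioo a₂ b₂) (ht : t₀ ∈ Ioc a₃ b₃)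
    (hxL : |x₀| < L) (hy₀ : 0 < y₀) (hyL : y₀ + h < L) (htT : t₀ ∈ Ioo 0 T) : False := by
  have hyI : y₀ ∈ Icc 0 L := ⟨hy₀.le, by linarith⟩
  have hyhI : y₀ + h ∈ Icc 0 L := ⟨by linarith, hyL.le⟩
  have hshift := hsol.smooth hxL.le hyhI htT
  have hbase := hsol.smooth hxL.le hyI htT
  have hxmin : IsLocalMin (fun x => yDiff u h x y₀ t₀ + ε * t₀) x₀ :=
    (hmin.on_preimage fun x => (x, y₀, t₀)).isLocalMin <| mem_of_superset
      (Icc_mem_nhds hx.1 hx.2) fun x hx' => ⟨hx', Ioo_subset_Icc_self hy, Ioc_subset_Icc_self ht⟩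
  have hymin : IsLocalMin (fun y => yDiff u h x₀ y t₀ + ε * t₀) y₀ :=
    (hmin.on_preimage fun y => (x₀, y, t₀)).isLocalMin <| mem_of_superset
      (Icc_mem_nhds hy.1 hy.2) fun y hy' => ⟨Ioo_subset_Icc_self hx, hy', Ioc_subset_Icc_self ht⟩
  have htmin : IsMinOn (fun t => yDiff u h x₀ y₀ t + ε * t) (uIcc t₀ a₃) t₀ := by
    refine (hmin.on_preimage fun t => (x₀, y₀, t)).on_subset fun t ht' => ?_
    rw [uIcc_of_ge ht.1.le] at ht'
    exact ⟨Ioo_subset_Icc_self hx, Ioo_subset_Icc_self hy, ht'.1, ht'.2.trans ht.2⟩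
  have hdx := hsol.eventually_hasDerivAt_yDiff_x hxL hyI hyhI htT
  have hdy := hsol.eventually_hasDerivAt_yDiff_y hh hxL.le hy₀ hyL htT
  have hpdx : pdx u x₀ (y₀ + h) t₀ - pdx u x₀ y₀ t₀ = 0 :=
    hxmin.hasDerivAt_eq_zero (hdx.self_of_nhds.add_const _)
  have hpdy : pdy u x₀ (y₀ + h) t₀ - pdy u x₀ y₀ t₀ = 0 :=
    hymin.hasDerivAt_eq_zero (hdy.self_of_nhds.add_const _)
  have hpdxx : 0 ≤ pdxx u x₀ (y₀ + h) t₀ - pdxx u x₀ y₀ t₀ :=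
    hxmin.nonneg_of_hasDerivAt_of_hasDerivAt (hdx.mono fun _ hd => hd.add_const _)
      (hshift.hasDerivAt_pdxx.sub hbase.hasDerivAt_pdxx)
  have hpdyy : 0 ≤ pdyy u x₀ (y₀ + h) t₀ - pdyy u x₀ y₀ t₀ :=
    hymin.nonneg_of_hasDerivAt_of_hasDerivAt (hdy.mono fun _ hd => hd.add_const _)
      ((hshift.hasDerivAt_pdyy.comp_add_const y₀ h).sub hbase.hasDerivAt_pdyy)
  have hpdt : pdt u x₀ (y₀ + h) t₀ - pdt u x₀ y₀ t₀ + ε ≤ 0 := by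
    have := htmin.mul_sub_nonneg_of_hasDerivAt
      ((hshift.hasDerivAt_pdt.sub hbase.hasDerivAt_pdt).add ((hasDerivAt_id t₀).const_mul ε))
    nlinarith [ht.1]
  have hgrad : gradNorm u x₀ (y₀ + h) t₀ = gradNorm u x₀ y₀ t₀ := by
    rw [gradNorm, gradNorm, sub_eq_zero.1 hpdx, sub_eq_zero.1 hpdy]
  have hpde_shift := hsol.pde hxL ⟨by linarith, hyL⟩ htT
  have hpde_base := hsol.pde hxL ⟨hy₀, by linarith⟩ htT
  rw [hgrad] at hpde_shift
  linarith

theorem neg_mul_le_yDiff_of_isMinOn (hsol : ClassicalSolution p L T u) {M h ε τ : ℝ}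
    (hM : 0 ≤ M) (hbd : GradNormLeOnOuterFaces L T M u) (hh : 0 < h) (hhL : h ≤ L / 4)
    (hε : 0 < ε) (hτ : τ < T) {x₀ y₀ t₀ : ℝ}
    (hmin : IsMinOn (fun q : ℝ × ℝ × ℝ => yDiff u h q.1 q.2.1 q.2.2 + ε * q.2.2)
      (Icc (-(L / 2)) (L / 2) ×ˢ Icc 0 (3 * L / 4) ×ˢ Icc (T / 2) τ) (x₀, y₀, t₀))
    (hx₀ : x₀ ∈ Icc (-(L / 2)) (L / 2)) (hy₀ : y₀ ∈ Icc 0 (3 * L / 4))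
    (ht₀ : t₀ ∈ Icc (T / 2) τ) : -(M * h) ≤ yDiff u h x₀ y₀ t₀ := by
  have ht₀T : t₀ ∈ Ioo 0 T := ⟨by linarith [ht₀.1, ht₀.2], by linarith [ht₀.2]⟩
  have hx₀L : |x₀| ≤ L / 2 := abs_le.2 hx₀
  by_cases hbottom : y₀ = 0
  · subst hbottom
    have hbc : u x₀ 0 t₀ = 0 := hsol.bc (by linarith) ht₀T
    have hnonneg : 0 ≤ u x₀ (0 + h) t₀ := hsol.nonneg (by linarith) ⟨by linarith, by linarith⟩ ht₀T
    rw [yDiff, hbc]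
    nlinarith
  by_cases hface : |x₀| = L / 2 ∨ y₀ = 3 * L / 4 ∨ t₀ = T / 2
  · have hs : ∀ s ∈ Icc y₀ (y₀ + h), s ∈ Icc 0 L := fun s hs =>
      ⟨by linarith [hs.1, hy₀.1], by linarith [hs.2, hy₀.2]⟩
    refine neg_mul_le_yDiff hh.le
      (fun s hs' => (hsol.smooth (by linarith) (hs s hs') ht₀T).hasDerivAt_pdy.differentiableAt)
      fun s hs' => hbd hx₀L (hs s hs') ⟨ht₀.1, ht₀T.2⟩ ?_
    rcases hface with hface | hface | hface
    · exact Or.inl hface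
    · exact Or.inr (Or.inl (by linarith [hs'.1]))
    · exact Or.inr (Or.inr hface)
  obtain ⟨hxface, hyface, htface⟩ := not_or.1 hface |>.imp_right not_or.1
  have hy₀pos : 0 < y₀ := lt_of_le_of_ne hy₀.1 (Ne.symm hbottom)
  have hy₀lt : y₀ < 3 * L / 4 := lt_of_le_of_ne hy₀.2 hyface
  exact (hsol.not_isMinOn_yDiff_add_interior hh.le hε hmin
    (abs_lt.1 (lt_of_le_of_ne hx₀L hxface)) ⟨hy₀pos, hy₀lt⟩
    ⟨lt_of_le_of_ne ht₀.1 (Ne.symm htface), ht₀.2⟩ (by linarith) hy₀pos (by linarith) ht₀T).elim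

theorem neg_mul_add_le_yDiff_add (hsol : ClassicalSolution p L T u) {M h ε : ℝ} (hM : 0 ≤ M)
    (hbd : GradNormLeOnOuterFaces L T M u) (hh : 0 < h) (hhL : h ≤ L / 4) (hε : 0 < ε)
    {x y t : ℝ} (hx : |x| ≤ L / 2) (hy : y ∈ Icc 0 (3 * L / 4)) (ht : t ∈ Ico (T / 2) T) :
    -(M * h) + ε * (T / 2) ≤ yDiff u h x y t + ε * t := by
  set S := Icc (-(L / 2)) (L / 2) ×ˢ Icc 0 (3 * L / 4) ×ˢ Icc (T / 2) t
  have hmem : (x, y, t) ∈ S := ⟨abs_le.1 hx, hy, ht.1, le_rfl⟩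
  have hcont : ContinuousOn (fun q : ℝ × ℝ × ℝ => yDiff u h q.1 q.2.1 q.2.2 + ε * q.2.2) S := by
    rintro ⟨x', y', t'⟩ ⟨hx', hy', ht'⟩
    dsimp only at hx' hy' ht'
    have hxL : |x'| ≤ L := (abs_le.2 hx').trans (by linarith)
    have ht'T : t' ∈ Ioo 0 T := ⟨by linarith [ht'.1, ht.1, ht.2], by linarith [ht'.2, ht.2]⟩
    exact ((continuousAt_yDiff (hsol.smooth hxL ⟨by linarith [hy'.1], by linarith [hy'.2]⟩ ht'T)
      (hsol.smooth hxL ⟨hy'.1, by linarith [hy'.2]⟩ ht'T)).add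
      (by fun_prop)).continuousWithinAt
  obtain ⟨⟨x₀, y₀, t₀⟩, ⟨hx₀, hy₀, ht₀⟩, hmin⟩ :=
    (isCompact_Icc.prod (isCompact_Icc.prod isCompact_Icc)).exists_isMinOn ⟨_, hmem⟩ hcont
  dsimp only at hx₀ hy₀ ht₀
  have hmin₀ := hsol.neg_mul_le_yDiff_of_isMinOn hM hbd hh hhL hε ht.2 hmin hx₀ hy₀ ht₀
  have hεt : ε * (T / 2) ≤ ε * t₀ := mul_le_mul_of_nonneg_left ht₀.1 hε.le
  have hle : yDiff u h x₀ y₀ t₀ + ε * t₀ ≤ yDiff u h x y t + ε * t := isMinOn_iff.1 hmin _ hmem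
  linarith

theorem neg_le_pdy_of_lt (hsol : ClassicalSolution p L T u) (hL : 0 < L) {M : ℝ} (hM : 0 ≤ M)
    (hbd : GradNormLeOnOuterFaces L T M u) {x y t : ℝ} (hx : |x| ≤ L / 2)
    (hy : y ∈ Icc 0 (L / 2)) (ht : t ∈ Ico (T / 2) T) : -M ≤ pdy u x y t := by
  have hdiff : ∀ h ∈ Ioc 0 (L / 4), -(M * h) ≤ yDiff u h x y t := by
    intro h hh
    have hlim : Tendsto (fun ε => yDiff u h x y t + ε * (t - T / 2)) (𝓝[>] 0)
        (𝓝 (yDiff u h x y t)) := by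
      have hcont : Continuous fun ε : ℝ => yDiff u h x y t + ε * (t - T / 2) := by fun_prop
      simpa using (hcont.tendsto 0).mono_left nhdsWithin_le_nhds
    refine ge_of_tendsto hlim (eventually_nhdsWithin_of_forall fun ε hε => ?_)
    have := hsol.neg_mul_add_le_yDiff_add hM hbd hh.1 hh.2 hε hx ⟨hy.1, by linarith [hy.2]⟩ ht
    linarith [mul_sub ε t (T / 2)]
  have hmin : IsMinOn (fun s => u x s t + M * s) (uIcc y (y + L / 4)) y := by
    refine isMinOn_iff.2 fun s hs => ?_
    rw [uIcc_of_le (by linarith)] at hs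
    rcases hs.1.eq_or_lt with rfl | hlt
    · exact le_rfl
    have := hdiff (s - y) ⟨by linarith, by linarith [hs.2]⟩
    rw [yDiff, add_sub_cancel] at this
    linarith [mul_sub M s y]
  have hderiv := (hsol.smooth (by linarith) ⟨hy.1, by linarith [hy.2]⟩
    ⟨by linarith [ht.1, ht.2], ht.2⟩).hasDerivAt_pdy.add ((hasDerivAt_id y).const_mul M)
  have := hmin.mul_sub_nonneg_of_hasDerivAt hderiv
  simp only [add_sub_cancel_left, mul_one] at this
  nlinarith

theorem exists_gradNormLeOnOuterFaces (hsol : ClassicalSolution p L T u) (hL : 0 < L)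
    (hT : 0 < T) (hgbu : IsolatedGBU L T u) :
    ∃ M, 0 ≤ M ∧ GradNormLeOnOuterFaces L T M u := by
  set K : Set (ℝ × ℝ) :=
    (Icc (-(L / 2)) (L / 2) ×ˢ Icc 0 L) \ (Ioo (-(L / 2)) (L / 2) ×ˢ Iio (3 * L / 4))
  have hKsub : K ⊆ (Icc (-L) L ×ˢ Icc 0 L) \ {(0, 0)} := by
    rintro ⟨a, b⟩ ⟨⟨ha, hb⟩, hnot⟩
    refine ⟨⟨⟨by linarith [ha.1], by linarith [ha.2]⟩, hb⟩, fun h0 => hnot ?_⟩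
    obtain ⟨rfl, rfl⟩ := Prod.mk.inj h0
    exact ⟨⟨by linarith, by linarith⟩, show (0 : ℝ) < 3 * L / 4 by linarith⟩
  obtain ⟨M₁, hM₁⟩ := hgbu.bounded K
    ((isCompact_Icc.prod isCompact_Icc).diff (isOpen_Ioo.prod isOpen_Iio)) hKsub
  have hinit : ContinuousOn (fun q : ℝ × ℝ => gradNorm u q.1 q.2 (T / 2))
      (Icc (-(L / 2)) (L / 2) ×ˢ Icc 0 L) := by
    rintro ⟨a, b⟩ ⟨ha, hb⟩
    exact (hsol.smooth ((abs_le.2 ha).trans (by linarith)) hb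
      ⟨by linarith, by linarith⟩).continuousAt_gradNorm_slice.continuousWithinAt
  obtain ⟨M₂, hM₂⟩ := (isCompact_Icc.prod isCompact_Icc).exists_bound_of_continuousOn hinit
  refine ⟨max (max M₁ M₂) 0, le_max_right _ _, fun x y t hx hy ht hface => ?_⟩
  by_cases ht₀ : t = T / 2
  · subst ht₀
    exact le_max_of_le_left <| le_max_of_le_right <|
      (le_abs_self _).trans (hM₂ (x, y) ⟨abs_le.1 hx, hy⟩)
  have hK : (x, y) ∈ K := by
    refine ⟨⟨abs_le.1 hx, hy⟩, fun ⟨hx', hy'⟩ => ?_⟩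
    rcases hface with hface | hface | hface
    · exact (abs_lt.2 hx').ne hface
    · exact absurd hy' (not_lt.2 hface)
    · exact ht₀ hface
  exact le_max_of_le_left <| le_max_of_le_left <| hM₁ (x, y) hK t ⟨by linarith [ht.1], ht.2⟩

end ClassicalSolution

theorem uy_lower_bound_general (p L T : ℝ) (hL : 0 < L) (hT : 0 < T)
    (u : ℝ → ℝ → ℝ → ℝ)
    (hsol : ClassicalSolution p L T u) (hgbu : IsolatedGBU L T u)
    (hext : ExtC21 L T u) :
    ∃ C : ℝ, 0 < C ∧ ∀ x y t : ℝ, |x| ≤ L/2 → y ∈ Icc (0:ℝ) (L/2) →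
      t ∈ Icc (T/2) T → ¬(x = 0 ∧ y = 0 ∧ t = T) → -C ≤ pdy u x y t := by
  obtain ⟨M, hM, hbd⟩ := hsol.exists_gradNormLeOnOuterFaces hL hT hgbu
  refine ⟨M + 1, by linarith, fun x y t hx hy ht hne => ?_⟩
  suffices -M ≤ pdy u x y t by linarith
  rcases ht.2.lt_or_eq with hlt | rfl
  · exact hsol.neg_le_pdy_of_lt hL hM hbd hx hy ⟨ht.1, hlt⟩
  refine ge_of_tendsto (hext hx hy ht hne).continuousWithinAt_pdy_left ?_
  filter_upwards [Ico_mem_nhdsLT (by linarith : t / 2 < t)] with s hs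
  exact hsol.neg_le_pdy_of_lt hL hM hbd hx hy hs

/-- Proposition 2.2 (ii): `u_y ≥ -C` on `Q̃ = (ω̄' × [T/2,T]) \ {(0,0,T)}`. -/
theorem uy_lower_bound (p L T : ℝ) (hp : 2 < p) (hL : 0 < L) (hT : 0 < T)
    (u : ℝ → ℝ → ℝ → ℝ)
    (hsol : ClassicalSolution p L T u) (hgbu : IsolatedGBU L T u)
    (hext : ExtC21 L T u) :
    ∃ C : ℝ, 0 < C ∧ ∀ x y t : ℝ, |x| ≤ L/2 → y ∈ Icc (0:ℝ) (L/2) →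
      t ∈ Icc (T/2) T → ¬(x = 0 ∧ y = 0 ∧ t = T) → -C ≤ pdy u x y t :=
  uy_lower_bound_general p L T hL hT u hsol hgbu hext
end
end
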